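/- Let a > 0 and let F, G : ℝ → ℝ satisfy F''(v) = f(v)·cos(av), G''(v) = (1/a)·f(v)·sin(av) for a continuous f, with F(0)=F'(0)=G(0)=G'(0)=0. Define x(u,v) = (u·cos(av) + F(v), v, (u/a)·sin(av) + G(v)), e₁(v) = (cos(av), 0, (1/a)sin(av)), e₃(v) = (−a·sin(av), 0, cos(av)), e₂(u,v) = u·e₃(v) + (F'(v), 1, G'(v)). Then ∂x/∂u = e₁, ∂x/∂v = e₂, ∂e₁/∂v = e₃, ∂e₂/∂u = e₃, ∂e₂/∂v = (−u·a² + f(v))·e₁, ∂e₃/∂v = −a²·e₁, and det[e₁ e₂ e₃] = 1. -/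

import Mathlib

/-! The surface is ruled: `x = u • e₁(v) + γ(v)` with `γ = (F, v, G)` and `e₂ = u • e₃ + γ'`.
The vector `e₁ = (cos av, 0, sin(av)/a)` runs around an ellipse with `e₁' = e₃` and
`e₃' = -a² e₁`, while `γ'' = f • e₁` by the defining equations of `F` and `G`; every frame
equation is then the Leibniz rule for `u • e(v) + γ(v)`, and the determinant expands to
`cos² + sin² = 1`. -/

open Real

theorem hasDerivAt_vecCons₃ {f₀ f₁ f₂ : ℝ → ℝ} {d₀ d₁ d₂ t : ℝ} (h₀ : HasDerivAt f₀ d₀ t)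
    (h₁ : HasDerivAt f₁ d₁ t) (h₂ : HasDerivAt f₂ d₂ t) :
    HasDerivAt (fun s => ![f₀ s, f₁ s, f₂ s]) ![d₀, d₁, d₂] t := by
  rw [hasDerivAt_pi]
  intro i
  fin_cases i <;> assumption

theorem hasDerivAt_cos_mul (a t : ℝ) :
    HasDerivAt (fun s => cos (a * s)) (-a * sin (a * t)) t := by
  simpa [mul_comm] using ((hasDerivAt_id t).const_mul a).cos

theorem hasDerivAt_sin_mul (a t : ℝ) :
    HasDerivAt (fun s => sin (a * s)) (a * cos (a * t)) t := by
  simpa [mul_comm] using ((hasDerivAt_id t).const_mul a).sin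

section EllipseFrame

variable {a : ℝ} (t : ℝ)

theorem hasDerivAt_ellipseFrame₁ (ha : a ≠ 0) :
    HasDerivAt (fun s => ![cos (a * s), 0, (1 / a) * sin (a * s)])
      ![-a * sin (a * t), 0, cos (a * t)] t := by
  convert hasDerivAt_vecCons₃ (hasDerivAt_cos_mul a t) (hasDerivAt_const t 0)
    ((hasDerivAt_sin_mul a t).const_mul (1 / a)) using 3
  field_simp

theorem hasDerivAt_ellipseFrame₃ (ha : a ≠ 0) :
    HasDerivAt (fun s => ![-a * sin (a * s), 0, cos (a * s)])
      ((-a ^ 2) • ![cos (a * t), 0, (1 / a) * sin (a * t)]) t := by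
  convert hasDerivAt_vecCons₃ ((hasDerivAt_sin_mul a t).const_mul (-a)) (hasDerivAt_const t 0)
    (hasDerivAt_cos_mul a t) using 1
  ext i
  fin_cases i <;> simp <;> field_simp

theorem det_ellipseFrame (ha : a ≠ 0) (u p q : ℝ) :
    (Matrix.of fun i j => ![![cos (a * t), 0, (1 / a) * sin (a * t)],
      u • ![-a * sin (a * t), 0, cos (a * t)] + ![p, 1, q],
      ![-a * sin (a * t), 0, cos (a * t)]] j i).det = 1 := by
  simp only [Matrix.det_fin_three, Matrix.of_apply, Matrix.cons_val, Pi.add_apply,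
    Pi.smul_apply, smul_eq_mul]
  field_simp
  linear_combination a * sin_sq_add_cos_sq (a * t)

end EllipseFrame

theorem ell_negative_example_solves_system_general
    (a : ℝ) (ha : 0 < a) (f F G F' G' : ℝ → ℝ)
    (hF : ∀ v, HasDerivAt F (F' v) v)
    (hF' : ∀ v, HasDerivAt F' (f v * Real.cos (a * v)) v)
    (hG : ∀ v, HasDerivAt G (G' v) v)
    (hG' : ∀ v, HasDerivAt G' ((1 / a) * f v * Real.sin (a * v)) v)
    (x : ℝ → ℝ → (Fin 3 → ℝ)) (e₁ e₃ : ℝ → (Fin 3 → ℝ))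
    (e₂ : ℝ → ℝ → (Fin 3 → ℝ))
    (hxdef : ∀ u v, x u v =
      ![u * Real.cos (a * v) + F v, v, (u / a) * Real.sin (a * v) + G v])
    (he₁def : ∀ v, e₁ v = ![Real.cos (a * v), 0, (1 / a) * Real.sin (a * v)])
    (he₃def : ∀ v, e₃ v = ![-a * Real.sin (a * v), 0, Real.cos (a * v)])
    (he₂def : ∀ u v, e₂ u v = u • e₃ v + ![F' v, 1, G' v]) :
    (∀ u v, HasDerivAt (fun u' => x u' v) (e₁ v) u) ∧
    (∀ u v, HasDerivAt (fun v' => x u v') (e₂ u v) v) ∧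
    (∀ v, HasDerivAt e₁ (e₃ v) v) ∧
    (∀ u v, HasDerivAt (fun u' => e₂ u' v) (e₃ v) u) ∧
    (∀ u v, HasDerivAt (fun v' => e₂ u v') ((-u * a ^ 2 + f v) • e₁ v) v) ∧
    (∀ v, HasDerivAt e₃ ((-a ^ 2) • e₁ v) v) ∧
    (∀ u v, (Matrix.of fun i j => ![e₁ v, e₂ u v, e₃ v] j i).det = 1) := by
  have hx : ∀ u v, x u v = u • e₁ v + ![F v, v, G v] := by
    intro u v
    rw [hxdef, he₁def]
    ext i
    fin_cases i <;> simp
    ring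
  have he₁' : ∀ v, HasDerivAt e₁ (e₃ v) v := fun v => by
    rw [funext he₁def, he₃def]
    exact hasDerivAt_ellipseFrame₁ v ha.ne'
  have he₃' : ∀ v, HasDerivAt e₃ ((-a ^ 2) • e₁ v) v := fun v => by
    rw [funext he₃def, he₁def]
    exact hasDerivAt_ellipseFrame₃ v ha.ne'
  have hγ : ∀ v, HasDerivAt (fun t => ![F t, t, G t]) ![F' v, 1, G' v] v := fun v =>
    hasDerivAt_vecCons₃ (hF v) (hasDerivAt_id' v) (hG v)
  have hγ' : ∀ v, HasDerivAt (fun t => ![F' t, 1, G' t]) (f v • e₁ v) v := fun v => by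
    convert hasDerivAt_vecCons₃ (hF' v) (hasDerivAt_const v 1) (hG' v) using 1
    rw [he₁def]
    ext i
    fin_cases i <;> simp
    ring
  refine ⟨fun u v => ?_, fun u v => ?_, he₁', fun u v => ?_, fun u v => ?_, he₃', fun u v => ?_⟩
  · simp only [hx]
    simpa using ((hasDerivAt_id u).smul_const (e₁ v)).add_const ![F v, v, G v]
  · simp only [hx, he₂def]
    exact ((he₁' v).const_smul u).add (hγ v)
  · simp only [he₂def]
    simpa using ((hasDerivAt_id u).smul_const (e₃ v)).add_const ![F' v, 1, G' v]
  · simp only [he₂def]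
    refine (((he₃' v).const_smul u).add (hγ' v)).congr_deriv ?_
    rw [smul_smul, ← add_smul, mul_neg, neg_mul]
  · rw [he₁def, he₂def, he₃def]
    exact det_ellipseFrame v ha.ne' u (F' v) (G' v)

/-- The explicit parametrization (5.3) with ℓ(v) = −a² < 0 solves the
structure system (4.4) and the frame is unimodular. -/
theorem ell_negative_example_solves_system
    (a : ℝ) (ha : 0 < a) (f F G F' G' : ℝ → ℝ) (hf : Continuous f)
    (hF : ∀ v, HasDerivAt F (F' v) v)
    (hF' : ∀ v, HasDerivAt F' (f v * Real.cos (a * v)) v)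
    (hG : ∀ v, HasDerivAt G (G' v) v)
    (hG' : ∀ v, HasDerivAt G' ((1 / a) * f v * Real.sin (a * v)) v)
    (hF0 : F 0 = 0) (hF'0 : F' 0 = 0) (hG0 : G 0 = 0) (hG'0 : G' 0 = 0)
    (x : ℝ → ℝ → (Fin 3 → ℝ)) (e₁ e₃ : ℝ → (Fin 3 → ℝ))
    (e₂ : ℝ → ℝ → (Fin 3 → ℝ))
    (hxdef : ∀ u v, x u v =
      ![u * Real.cos (a * v) + F v, v, (u / a) * Real.sin (a * v) + G v])
    (he₁def : ∀ v, e₁ v = ![Real.cos (a * v), 0, (1 / a) * Real.sin (a * v)])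
    (he₃def : ∀ v, e₃ v = ![-a * Real.sin (a * v), 0, Real.cos (a * v)])
    (he₂def : ∀ u v, e₂ u v = u • e₃ v + ![F' v, 1, G' v]) :
    (∀ u v, HasDerivAt (fun u' => x u' v) (e₁ v) u) ∧
    (∀ u v, HasDerivAt (fun v' => x u v') (e₂ u v) v) ∧
    (∀ v, HasDerivAt e₁ (e₃ v) v) ∧
    (∀ u v, HasDerivAt (fun u' => e₂ u' v) (e₃ v) u) ∧
    (∀ u v, HasDerivAt (fun v' => e₂ u v') ((-u * a ^ 2 + f v) • e₁ v) v) ∧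
    (∀ v, HasDerivAt e₃ ((-a ^ 2) • e₁ v) v) ∧
    (∀ u v, (Matrix.of fun i j => ![e₁ v, e₂ u v, e₃ v] j i).det = 1) :=
  ell_negative_example_solves_system_general a ha f F G F' G' hF hF' hG hG' x e₁ e₃ e₂ hxdef he₁def
    he₃def he₂def
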